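/- Linear convergence of VR-SGD (Option I, strongly convex): Under L-smoothness of each f_i, μ-strong convexity of F, the assumption E[F(x_0^s) − F(x*)] ≤ c·E[F(x̃^{s−1}) − F(x*)], and step η < 1/(3L), if ρ_I := (2Lη(m+c))/(m(1−3Lη)) + (c(1−Lη))/(m μ η(1−3Lη)) < 1, then E[F(x̂^S) − F(x*)] ≤ ρ_I^S (F(x̃^0) − F(x*)). -/

import Mathlib

/-!
Every inner step of VR-SGD is a proximal-gradient step with the variance-reduced estimate
`v = ∇f_i(x_k) - ∇f_i(x̃) + ∇f(x̃)`. Descent lemma, convexity of `f`, Young's inequality and the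
three-point property of the prox give, along every sample path,
`F(x_{k+1}) - F(x*) ≤ η/(2(1-Lη)) ‖v - ∇f(x_k)‖² + ⟪v - ∇f(x_k), x* - x_k⟫
  + (‖x* - x_k‖² - ‖x* - x_{k+1}‖²)/(2η)`.
Neither `x_k` nor `x̃` depends on the index `i` drawn at step `k`, so averaging over `i` removes
the inner product, and the variance term is at most `4L (F(x_k) - F(x*) + F(x̃) - F(x*))` by
co-coercivity of the `∇f_i` and optimality of `x*`. Summed over an epoch, the distances
telescope; the assumption on the starting point and the quadratic growth
`‖x₀ - x*‖² ≤ (2/μ)(F(x₀) - F(x*))` control what is left, and Jensen's inequality for the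
averaged snapshot yields `E[F(x̃^{s+1}) - F(x*)] ≤ ρ_I E[F(x̃^s) - F(x*)]`. The output `x̂` is
never worse than `x̃^S`. Expectations are uniform averages over all sample paths.
-/

open scoped BigOperators RealInnerProductSpace

open Set Filter Topology

lemma le_of_forall_one_sub_mul_le {a b : ℝ} (h : ∀ t ∈ Ioo (0 : ℝ) 1, (1 - t) * a ≤ b) :
    a ≤ b := by
  have hlim : Tendsto (fun t : ℝ => (1 - t) * a) (𝓝[>] 0) (𝓝 a) := by
    have hcont : Continuous fun t : ℝ => (1 - t) * a := by fun_prop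
    exact (hcont.tendsto' 0 a (by simp)).mono_left nhdsWithin_le_nhds
  refine le_of_tendsto hlim ?_
  filter_upwards [Ioo_mem_nhdsGT_of_mem (left_mem_Ico.2 one_pos)] using h

lemma le_of_hasDerivAt_of_forall_le_slope {φ : ℝ → ℝ} {φ' c : ℝ} (hφ : HasDerivAt φ φ' 0)
    (h : ∀ t ∈ Ioo (0 : ℝ) 1, c ≤ slope φ 0 t) : c ≤ φ' := by
  have hslope : Tendsto (slope φ 0) (𝓝[>] 0) (𝓝 φ') :=
    (hasDerivAt_iff_tendsto_slope.1 hφ).mono_left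
      (nhdsWithin_mono _ fun t (ht : 0 < t) => ht.ne')
  refine ge_of_tendsto hslope ?_
  filter_upwards [Ioo_mem_nhdsGT_of_mem (left_mem_Ico.2 one_pos)] using h

section Prox

variable {E : Type*} [NormedAddCommGroup E] [InnerProductSpace ℝ E]

lemma StrongConvexOn.mul_sq_norm_sub_le {F : E → ℝ} {μ : ℝ} (hF : StrongConvexOn univ μ F)
    {x₀ : E} (hmin : ∀ z, F x₀ ≤ F z) (z : E) : μ / 2 * ‖z - x₀‖ ^ 2 ≤ F z - F x₀ := by
  refine le_of_forall_one_sub_mul_le fun t ht => ?_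
  have h := hF.2 (mem_univ x₀) (mem_univ z) (sub_nonneg.2 ht.2.le) ht.1.le (by ring)
  have hm := hmin ((1 - t) • x₀ + t • z)
  rw [norm_sub_rev, smul_eq_mul, smul_eq_mul] at h
  have : t * ((1 - t) * (μ / 2 * ‖z - x₀‖ ^ 2)) ≤ t * (F z - F x₀) := by linarith
  exact le_of_mul_le_mul_left this ht.1

/-- `w` is the proximal-gradient step `prox_{η g}(xc - η v)` taken from `xc` with the
gradient estimate `v`. -/
def IsProxPoint (g : E → ℝ) (η : ℝ) (v xc w : E) : Prop :=
  ∀ y, g w + ⟪v, w⟫ + 1 / (2 * η) * ‖w - xc‖ ^ 2 ≤ g y + ⟪v, y⟫ + 1 / (2 * η) * ‖y - xc‖ ^ 2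

lemma ConvexOn.strongConvexOn_add_inner_add_sq {g : E → ℝ} (hg : ConvexOn ℝ univ g) (η : ℝ)
    (v xc : E) :
    StrongConvexOn univ η⁻¹ fun y => g y + ⟪v, y⟫ + 1 / (2 * η) * ‖y - xc‖ ^ 2 := by
  rw [strongConvexOn_iff_convex]
  have hlin : ConvexOn ℝ univ fun y : E => ⟪v - η⁻¹ • xc, y⟫ :=
    (innerₗ E (v - η⁻¹ • xc)).convexOn convex_univ
  have hfun : (fun y => g y + ⟪v, y⟫ + 1 / (2 * η) * ‖y - xc‖ ^ 2 - η⁻¹ / 2 * ‖y‖ ^ 2)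
      = fun y => g y + ⟪v - η⁻¹ • xc, y⟫ + 1 / (2 * η) * ‖xc‖ ^ 2 := by
    funext y
    rw [norm_sub_sq_real, inner_sub_left, real_inner_smul_left, real_inner_comm xc y]
    ring
  rw [hfun]
  exact (hg.add hlin).add_const _

variable {g : E → ℝ} {η : ℝ} {v xc w : E}

lemma IsProxPoint.add_sq_le (hg : ConvexOn ℝ univ g) (hw : IsProxPoint g η v xc w) (y : E) :
    g w + ⟪v, w⟫ + 1 / (2 * η) * ‖w - xc‖ ^ 2 + 1 / (2 * η) * ‖y - w‖ ^ 2
      ≤ g y + ⟪v, y⟫ + 1 / (2 * η) * ‖y - xc‖ ^ 2 := by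
  have h := (hg.strongConvexOn_add_inner_add_sq η v xc).mul_sq_norm_sub_le hw y
  rw [show η⁻¹ / 2 = 1 / (2 * η) by ring] at h
  linarith

lemma IsProxPoint.unique (hg : ConvexOn ℝ univ g) (hη : 0 < η) {w' : E}
    (hw : IsProxPoint g η v xc w) (hw' : IsProxPoint g η v xc w') : w = w' := by
  have h := hw.add_sq_le hg w'
  have h' := hw' w
  have hsq : ‖w' - w‖ ^ 2 ≤ 0 := by
    have : 0 < 1 / (2 * η) := by positivity
    nlinarith
  rw [eq_comm, ← sub_eq_zero, ← norm_eq_zero]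
  exact pow_eq_zero_iff two_ne_zero |>.1 (le_antisymm hsq (sq_nonneg _))

end Prox

lemma sum_norm_sub_sq_le {E ι : Type*} [NormedAddCommGroup E] [InnerProductSpace ℝ E]
    [Fintype ι] (u : ι → E) {G : E} (hG : ∑ j, u j = (Fintype.card ι : ℝ) • G) :
    ∑ j, ‖u j - G‖ ^ 2 ≤ ∑ j, ‖u j‖ ^ 2 := by
  have h : ∑ j, ‖u j - G‖ ^ 2 = ∑ j, ‖u j‖ ^ 2 - Fintype.card ι * ‖G‖ ^ 2 := by
    simp only [norm_sub_sq_real, Finset.sum_add_distrib, Finset.sum_sub_distrib,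
      ← Finset.mul_sum, ← sum_inner, hG, real_inner_smul_left, real_inner_self_eq_norm_sq,
      Finset.sum_const, Finset.card_univ, nsmul_eq_mul]
    ring
  rw [h]
  linarith [show 0 ≤ (Fintype.card ι : ℝ) * ‖G‖ ^ 2 by positivity]

lemma convexOn_average {E : Type*} [NormedAddCommGroup E] [InnerProductSpace ℝ E] {n : ℕ}
    {f : Fin n → E → ℝ} {favg : E → ℝ} (hconv : ∀ i, ConvexOn ℝ univ (f i))
    (hfavg : ∀ x, favg x = (1 / n : ℝ) * ∑ i, f i x) : ConvexOn ℝ univ favg := by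
  have hsum : ConvexOn ℝ univ (∑ i, f i) :=
    Finset.sum_induction _ (ConvexOn ℝ univ) (fun _ _ => ConvexOn.add)
      (convexOn_const 0 convex_univ) fun i _ => hconv i
  rw [show favg = fun x => (1 / n : ℝ) • (∑ i, f i) x by
    funext x; rw [hfavg, Finset.sum_apply, smul_eq_mul]]
  exact hsum.smul (by positivity)

section Gradient

open AffineMap

variable {E : Type*} [NormedAddCommGroup E] [InnerProductSpace ℝ E] [CompleteSpace E]

lemma hasDerivAt_comp_lineMap {f : E → ℝ} {x y : E} {t : ℝ}
    (hf : DifferentiableAt ℝ f (lineMap x y t)) :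
    HasDerivAt (fun s => f (lineMap x y s)) ⟪gradient f (lineMap x y t), y - x⟫ t := by
  have := hf.hasGradientAt.hasFDerivAt.comp_hasDerivAt t
    (hasDerivAt_lineMap (a := x) (b := y))
  rwa [InnerProductSpace.toDual_apply_apply] at this

lemma ConvexOn.add_inner_gradient_le {f : E → ℝ} (hf : ConvexOn ℝ univ f)
    (hdiff : Differentiable ℝ f) (x y : E) : f x + ⟪gradient f x, y - x⟫ ≤ f y := by
  have hline : ConvexOn ℝ univ fun t : ℝ => f (lineMap x y t) := by
    have := hf.comp_affineMap (lineMap x y)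
    rwa [preimage_univ] at this
  have hd := hasDerivAt_comp_lineMap (hdiff _) (x := x) (y := y) (t := 0)
  rw [lineMap_apply_zero] at hd
  have h := hline.le_slope_of_hasDerivAt (mem_univ 0) (mem_univ 1) one_pos hd
  rw [slope_def_field] at h
  simp only [lineMap_apply_one, lineMap_apply_zero, sub_zero, div_one] at h
  linarith

lemma inner_gradient_ge_of_isMin_add {f g : E → ℝ} (hf : Differentiable ℝ f)
    (hg : ConvexOn ℝ univ g) {x₀ : E} (hmin : ∀ z, f x₀ + g x₀ ≤ f z + g z) (y : E) :
    g x₀ - g y ≤ ⟪gradient f x₀, y - x₀⟫ := by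
  have hd := hasDerivAt_comp_lineMap (hf _) (x := x₀) (y := y) (t := 0)
  rw [lineMap_apply_zero] at hd
  refine le_of_hasDerivAt_of_forall_le_slope hd fun t ht => ?_
  have hgt : g (lineMap x₀ y t) ≤ (1 - t) * g x₀ + t * g y := by
    simpa [lineMap_apply_module] using
      hg.2 (mem_univ x₀) (mem_univ y) (sub_nonneg.2 ht.2.le) ht.1.le (by ring)
  have := hmin (lineMap x₀ y t)
  rw [slope_def_field, le_div_iff₀ (by simpa using ht.1)]
  simp only [lineMap_apply_zero, sub_zero]
  nlinarith

lemma le_add_inner_gradient_add_sq {f : E → ℝ} {L : ℝ} (hdiff : Differentiable ℝ f)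
    (hlip : ∀ a b, ‖gradient f a - gradient f b‖ ≤ L * ‖a - b‖) (x y : E) :
    f y ≤ f x + ⟪gradient f x, y - x⟫ + L / 2 * ‖y - x‖ ^ 2 := by
  set u := y - x
  let ψ : ℝ → ℝ := fun t =>
    f (lineMap x y t) - t * ⟪gradient f x, u⟫ - L / 2 * t ^ 2 * ‖u‖ ^ 2
  have hψ : ∀ t, HasDerivAt ψ
      (⟪gradient f (lineMap x y t), u⟫ - ⟪gradient f x, u⟫ - L * t * ‖u‖ ^ 2) t := by
    intro t
    have h := (((hasDerivAt_comp_lineMap (x := x) (y := y) (hdiff _)).sub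
      ((hasDerivAt_id t).mul_const ⟪gradient f x, u⟫)).sub
      (((hasDerivAt_pow 2 t).const_mul (L / 2)).mul_const (‖u‖ ^ 2)))
    refine h.congr_deriv ?_
    simp only [u]
    ring
  have hanti : AntitoneOn ψ (Icc 0 1) := by
    refine antitoneOn_of_hasDerivWithinAt_nonpos (convex_Icc 0 1)
      (HasDerivAt.continuousOn fun t _ => hψ t) (fun t _ => (hψ t).hasDerivWithinAt) ?_
    intro t ht
    rw [interior_Icc] at ht
    have hpt : lineMap x y t - x = t • u := by
      simp [lineMap_apply, u]
    have hcs := real_inner_le_norm (gradient f (lineMap x y t) - gradient f x) u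
    have hl := hlip (lineMap x y t) x
    rw [hpt, norm_smul, Real.norm_of_nonneg ht.1.le] at hl
    rw [inner_sub_left] at hcs
    nlinarith [norm_nonneg u]
  have h01 := hanti (left_mem_Icc.2 zero_le_one) (right_mem_Icc.2 zero_le_one) zero_le_one
  simp only [ψ, lineMap_apply_zero, lineMap_apply_one] at h01
  linarith

lemma ConvexOn.norm_gradient_sub_sq_le {f : E → ℝ} {L : ℝ} (hL : 0 < L)
    (hconv : ConvexOn ℝ univ f) (hdiff : Differentiable ℝ f)
    (hlip : ∀ a b, ‖gradient f a - gradient f b‖ ≤ L * ‖a - b‖) (x y : E) :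
    ‖gradient f x - gradient f y‖ ^ 2 ≤ 2 * L * (f x - f y - ⟪gradient f y, x - y⟫) := by
  set w := gradient f x - gradient f y
  have h1 := le_add_inner_gradient_add_sq hdiff hlip x (x - L⁻¹ • w)
  have h2 := hconv.add_inner_gradient_le hdiff y (x - L⁻¹ • w)
  have hw : ⟪gradient f x, w⟫ - ⟪gradient f y, w⟫ = ‖w‖ ^ 2 := by
    rw [← inner_sub_left, real_inner_self_eq_norm_sq]
  rw [sub_sub_cancel_left, inner_neg_right, real_inner_smul_right, norm_neg, norm_smul,
    Real.norm_of_nonneg (inv_nonneg.2 hL.le)] at h1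
  rw [sub_right_comm, inner_sub_right, real_inner_smul_right] at h2
  have key : L⁻¹ * ‖w‖ ^ 2 - L / 2 * (L⁻¹ * ‖w‖) ^ 2 = ‖w‖ ^ 2 / (2 * L) := by
    field_simp
    ring
  have hw' : L⁻¹ * ⟪gradient f x, w⟫ - L⁻¹ * ⟪gradient f y, w⟫ = L⁻¹ * ‖w‖ ^ 2 := by
    rw [← mul_sub, hw]
  have : ‖w‖ ^ 2 / (2 * L) ≤ f x - f y - ⟪gradient f y, x - y⟫ := by linarith
  rwa [div_le_iff₀ (by positivity), mul_comm] at this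

lemma IsProxPoint.add_sub_add_le {h g : E → ℝ} {L η : ℝ} (hη : 0 < η) (hLη : L * η < 1)
    (hconv : ConvexOn ℝ univ h) (hdiff : Differentiable ℝ h)
    (hlip : ∀ a b, ‖gradient h a - gradient h b‖ ≤ L * ‖a - b‖) (hg : ConvexOn ℝ univ g)
    {v x w : E} (hw : IsProxPoint g η v x w) (z : E) :
    h w + g w - (h z + g z)
      ≤ η / (2 * (1 - L * η)) * ‖v - gradient h x‖ ^ 2 + ⟪v - gradient h x, z - x⟫
        + 1 / (2 * η) * (‖z - x‖ ^ 2 - ‖z - w‖ ^ 2) := by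
  set Δ := v - gradient h x
  have hprox := hw.add_sq_le hg z
  have hdesc := le_add_inner_gradient_add_sq hdiff hlip x w
  have hfirst := hconv.add_inner_gradient_le hdiff x z
  have hinner : ⟪gradient h x, w - x⟫ - ⟪gradient h x, z - x⟫ + ⟪v, z⟫ - ⟪v, w⟫
      = ⟪Δ, z - x⟫ + ⟪Δ, x - w⟫ := by
    simp only [Δ, inner_sub_left, inner_sub_right]
    abel
  -- Young's inequality with weight `ε = η / (1 - L η)` absorbs the cross term `⟪Δ, x - w⟫`.
  have hε : 0 < η / (1 - L * η) := div_pos hη (by linarith)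
  have hyoung := two_mul_le_add_mul_sq (a := ‖Δ‖) (b := ‖w - x‖) hε
  have hcs : ⟪Δ, x - w⟫ ≤ ‖Δ‖ * ‖w - x‖ :=
    (real_inner_le_norm _ _).trans_eq (by rw [norm_sub_rev x w])
  have hLη' : 1 - L * η ≠ 0 := by linarith
  have hcoef : ((η / (1 - L * η))⁻¹ / 2 + L / 2 - 1 / (2 * η)) * ‖w - x‖ ^ 2 = 0 := by
    field_simp
    ring
  have hcoef' : η / (1 - L * η) / 2 = η / (2 * (1 - L * η)) := by field_simp
  nlinarith

end Gradient

section FiniteSum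

variable {E : Type*} [NormedAddCommGroup E] [InnerProductSpace ℝ E] [CompleteSpace E]
  {n : ℕ} {f : Fin n → E → ℝ} {favg : E → ℝ}

lemma hasGradientAt_average (hdiff : ∀ i, Differentiable ℝ (f i))
    (hfavg : ∀ x, favg x = (1 / n : ℝ) * ∑ i, f i x) (z : E) :
    HasGradientAt favg ((n : ℝ)⁻¹ • ∑ i, gradient (f i) z) z := by
  have hsum : HasFDerivAt (fun y => (1 / n : ℝ) * ∑ i, f i y)
      ((1 / n : ℝ) • ∑ i, InnerProductSpace.toDual ℝ E (gradient (f i) z)) z :=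
    (HasFDerivAt.fun_sum fun i _ => (hdiff i z).hasGradientAt.hasFDerivAt).const_mul _
  rw [← funext hfavg] at hsum
  rw [hasGradientAt_iff_hasFDerivAt, map_smul, map_sum, ← one_div]
  exact hsum

lemma sum_gradient_eq_smul (hn : n ≠ 0) (hdiff : ∀ i, Differentiable ℝ (f i))
    (hfavg : ∀ x, favg x = (1 / n : ℝ) * ∑ i, f i x) (z : E) :
    ∑ i, gradient (f i) z = (n : ℝ) • gradient favg z := by
  rw [(hasGradientAt_average hdiff hfavg z).gradient, smul_smul,
    mul_inv_cancel₀ (Nat.cast_ne_zero.2 hn), one_smul]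

lemma differentiable_average (hdiff : ∀ i, Differentiable ℝ (f i))
    (hfavg : ∀ x, favg x = (1 / n : ℝ) * ∑ i, f i x) : Differentiable ℝ favg :=
  fun z => (hasGradientAt_average hdiff hfavg z).differentiableAt

lemma norm_gradient_average_sub_le {L : ℝ} (hn : n ≠ 0) (hdiff : ∀ i, Differentiable ℝ (f i))
    (hlip : ∀ i a b, ‖gradient (f i) a - gradient (f i) b‖ ≤ L * ‖a - b‖)
    (hfavg : ∀ x, favg x = (1 / n : ℝ) * ∑ i, f i x) (a b : E) :
    ‖gradient favg a - gradient favg b‖ ≤ L * ‖a - b‖ := by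
  have hn' : (0 : ℝ) < n := Nat.cast_pos.2 (Nat.pos_of_ne_zero hn)
  have h : (n : ℝ) * ‖gradient favg a - gradient favg b‖ ≤ n * (L * ‖a - b‖) := by
    calc (n : ℝ) * ‖gradient favg a - gradient favg b‖
        = ‖∑ i, (gradient (f i) a - gradient (f i) b)‖ := by
          rw [Finset.sum_sub_distrib, sum_gradient_eq_smul hn hdiff hfavg,
            sum_gradient_eq_smul hn hdiff hfavg, ← smul_sub, norm_smul, Real.norm_of_nonneg hn'.le]
      _ ≤ ∑ i : Fin n, L * ‖a - b‖ := norm_sum_le_of_le _ fun i _ => hlip i a b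
      _ = n * (L * ‖a - b‖) := by simp
  exact le_of_mul_le_mul_left h hn'

end FiniteSum

section Composite

variable {E : Type*} [NormedAddCommGroup E] [InnerProductSpace ℝ E] [CompleteSpace E] {n : ℕ}

structure IsCompositeFiniteSum (L : ℝ) (f : Fin n → E → ℝ) (favg g F : E → ℝ) : Prop where
  convexOn : ∀ i, ConvexOn ℝ univ (f i)
  differentiable : ∀ i, Differentiable ℝ (f i)
  lipschitz_gradient : ∀ i x y, ‖gradient (f i) x - gradient (f i) y‖ ≤ L * ‖x - y‖
  average_eq : ∀ x, favg x = (1 / n : ℝ) * ∑ i, f i x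
  convexOn_g : ConvexOn ℝ univ g
  eq_add : ∀ x, F x = favg x + g x

noncomputable def vrGrad (f : Fin n → E → ℝ) (favg : E → ℝ) (i : Fin n) (y y' : E) : E :=
  gradient (f i) y - gradient (f i) y' + gradient favg y'

namespace IsCompositeFiniteSum

variable {L : ℝ} {f : Fin n → E → ℝ} {favg g F : E → ℝ} {x₀ : E}

lemma sum_norm_gradient_sub_sq_le (P : IsCompositeFiniteSum L f favg g F) (hn : n ≠ 0)
    (hL : 0 < L) (hmin : ∀ z, F x₀ ≤ F z) (z : E) :
    ∑ i, ‖gradient (f i) z - gradient (f i) x₀‖ ^ 2 ≤ n * (2 * L * (F z - F x₀)) := by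
  have hopt : g x₀ - g z ≤ ⟪gradient favg x₀, z - x₀⟫ :=
    inner_gradient_ge_of_isMin_add (differentiable_average P.differentiable P.average_eq)
      P.convexOn_g (fun y => by simpa only [P.eq_add] using hmin y) z
  have hsum : ∀ y, ∑ i, f i y = n * favg y := fun y => by
    rw [P.average_eq]
    field_simp
  calc ∑ i, ‖gradient (f i) z - gradient (f i) x₀‖ ^ 2
      ≤ ∑ i, 2 * L * (f i z - f i x₀ - ⟪gradient (f i) x₀, z - x₀⟫) :=
        Finset.sum_le_sum fun i _ => (P.convexOn i).norm_gradient_sub_sq_le hL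
          (P.differentiable i) (P.lipschitz_gradient i) z x₀
    _ = n * (2 * L * (favg z - favg x₀ - ⟪gradient favg x₀, z - x₀⟫)) := by
        simp only [← Finset.mul_sum, Finset.sum_sub_distrib, ← sum_inner, hsum,
          sum_gradient_eq_smul hn P.differentiable P.average_eq, real_inner_smul_left]
        ring
    _ ≤ n * (2 * L * (F z - F x₀)) := by
        rw [P.eq_add, P.eq_add]
        gcongr (n : ℝ) * (2 * L * ?_)
        linarith

lemma sum_vrGrad_sub_gradient (P : IsCompositeFiniteSum L f favg g F) (hn : n ≠ 0) (y y' : E) :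
    ∑ i, (vrGrad f favg i y y' - gradient favg y) = 0 := by
  simp only [vrGrad, Finset.sum_sub_distrib, Finset.sum_add_distrib,
    sum_gradient_eq_smul hn P.differentiable P.average_eq, Finset.sum_const, Finset.card_univ,
    Fintype.card_fin, ← Nat.cast_smul_eq_nsmul ℝ]
  abel

lemma sum_norm_vrGrad_sub_sq_le (P : IsCompositeFiniteSum L f favg g F) (hn : n ≠ 0)
    (hL : 0 < L) (hmin : ∀ z, F x₀ ≤ F z) (y y' : E) :
    ∑ i, ‖vrGrad f favg i y y' - gradient favg y‖ ^ 2
      ≤ n * (4 * L * ((F y - F x₀) + (F y' - F x₀))) := by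
  have hmean : ∑ i, (gradient (f i) y - gradient (f i) y')
      = (Fintype.card (Fin n) : ℝ) • (gradient favg y - gradient favg y') := by
    rw [Finset.sum_sub_distrib, sum_gradient_eq_smul hn P.differentiable P.average_eq,
      sum_gradient_eq_smul hn P.differentiable P.average_eq, Fintype.card_fin, smul_sub]
  have hsplit : ∀ i, ‖gradient (f i) y - gradient (f i) y'‖ ^ 2
      ≤ 2 * ‖gradient (f i) y - gradient (f i) x₀‖ ^ 2
        + 2 * ‖gradient (f i) y' - gradient (f i) x₀‖ ^ 2 := fun i => by
    have := norm_sub_le_norm_sub_add_norm_sub (gradient (f i) y) (gradient (f i) x₀)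
      (gradient (f i) y')
    rw [norm_sub_rev (gradient (f i) x₀)] at this
    nlinarith [norm_nonneg (gradient (f i) y - gradient (f i) y'),
      sq_nonneg (‖gradient (f i) y - gradient (f i) x₀‖ - ‖gradient (f i) y' - gradient (f i) x₀‖)]
  calc ∑ i, ‖vrGrad f favg i y y' - gradient favg y‖ ^ 2
      = ∑ i, ‖(gradient (f i) y - gradient (f i) y')
          - (gradient favg y - gradient favg y')‖ ^ 2 := by
        congr! 3 with i
        simp only [vrGrad]
        abel
    _ ≤ ∑ i, ‖gradient (f i) y - gradient (f i) y'‖ ^ 2 := sum_norm_sub_sq_le _ hmean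
    _ ≤ ∑ i, (2 * ‖gradient (f i) y - gradient (f i) x₀‖ ^ 2
          + 2 * ‖gradient (f i) y' - gradient (f i) x₀‖ ^ 2) :=
        Finset.sum_le_sum fun i _ => hsplit i
    _ ≤ n * (4 * L * ((F y - F x₀) + (F y' - F x₀))) := by
        rw [Finset.sum_add_distrib, ← Finset.mul_sum, ← Finset.mul_sum]
        linarith [P.sum_norm_gradient_sub_sq_le hn hL hmin y,
          P.sum_norm_gradient_sub_sq_le hn hL hmin y']

end IsCompositeFiniteSum

end Composite

lemma card_mul_sum_apply_eq_sum_sum {ι β α : Type*} [Fintype ι] [DecidableEq ι] [Fintype β]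
    (i : ι) (P : (ι → β) → α) (hP : ∀ ω ω', (∀ j ≠ i, ω j = ω' j) → P ω = P ω')
    (Φ : β → α → ℝ) :
    (Fintype.card β : ℝ) * ∑ ω, Φ (ω i) (P ω) = ∑ ω, ∑ b, Φ b (P ω) := by
  let e := (Equiv.funSplitAt i β).symm
  have hPe : ∀ b b' r, P (e (b', r)) = P (e (b, r)) := fun b b' r =>
    hP _ _ fun j hj => by simp [e, Equiv.funSplitAt, hj]
  have hei : ∀ b r, e (b, r) i = b := fun b r => by simp [e, Equiv.funSplitAt]
  rw [← e.sum_comp, ← e.sum_comp, Fintype.sum_prod_type, Fintype.sum_prod_type]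
  simp only [hei]
  conv_rhs => enter [2, b', 2, r, 2, b]; rw [hPe b b' r]
  rw [Finset.sum_const, Finset.card_univ, nsmul_eq_mul, Finset.sum_comm]

lemma card_mul_sum_apply_apply_eq_sum_sum {α β γ δ : Type*} [Fintype α] [DecidableEq α]
    [Fintype β] [DecidableEq β] [Fintype γ] (a : α) (b : β) (P : (α → β → γ) → δ)
    (hP : ∀ ω ω', (∀ a' b', (a', b') ≠ (a, b) → ω a' b' = ω' a' b') → P ω = P ω')
    (Φ : γ → δ → ℝ) :
    (Fintype.card γ : ℝ) * ∑ ω, Φ (ω a b) (P ω) = ∑ ω, ∑ c, Φ c (P ω) := by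
  let e := Equiv.curry α β γ
  have h := card_mul_sum_apply_eq_sum_sum (a, b) (P ∘ e)
    (fun ω ω' hω => hP _ _ fun a' b' h => hω (a', b') h) Φ
  rw [← e.sum_comp, ← e.sum_comp]
  exact h

lemma one_sub_mul_sum_le_of_le_add_sub {D R : ℕ → ℝ} {α β T : ℝ} {m : ℕ} (hα : 0 ≤ α)
    (hβ : 0 ≤ β) (hDm : 0 ≤ D m) (hRm : 0 ≤ R m)
    (h : ∀ k < m, D (k + 1) ≤ α * (D k + T) + β * (R k - R (k + 1))) :
    (1 - α) * ∑ k ∈ Finset.range m, D (k + 1) ≤ α * D 0 + α * m * T + β * R 0 := by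
  have hsum : ∑ k ∈ Finset.range m, D (k + 1)
      ≤ α * ∑ k ∈ Finset.range m, D k + α * m * T + β * (R 0 - R m) := by
    calc ∑ k ∈ Finset.range m, D (k + 1)
        ≤ ∑ k ∈ Finset.range m, (α * (D k + T) + β * (R k - R (k + 1))) :=
          Finset.sum_le_sum fun k hk => h k (Finset.mem_range.1 hk)
      _ = _ := by
          rw [Finset.sum_add_distrib, ← Finset.mul_sum, ← Finset.mul_sum, Finset.sum_add_distrib,
            Finset.sum_range_sub', Finset.sum_const, Finset.card_range, nsmul_eq_mul]
          ring
  have hshift := Finset.sum_range_succ' D m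
  rw [Finset.sum_range_succ] at hshift
  nlinarith [mul_nonneg hα hDm, mul_nonneg hβ hRm]

/-- The rate `ρ_I`. -/
noncomputable def vrsgdRate (L μ η c : ℝ) (m : ℕ) : ℝ :=
  2 * L * η * ((m : ℝ) + c) / ((m : ℝ) * (1 - 3 * L * η))
    + c * (1 - L * η) / ((m : ℝ) * μ * η * (1 - 3 * L * η))

lemma vrsgdRate_nonneg {L μ η c : ℝ} {m : ℕ} (hL : 0 < L) (hμ : 0 < μ) (hη : 0 < η)
    (hLη : 3 * L * η < 1) (hc : 0 ≤ c) : 0 ≤ vrsgdRate L μ η c m := by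
  have h3 : 0 ≤ 1 - 3 * L * η := by linarith
  have h1 : 0 ≤ 1 - L * η := by nlinarith
  exact add_nonneg (div_nonneg (by positivity) (mul_nonneg (by positivity) h3))
    (div_nonneg (mul_nonneg hc h1) (mul_nonneg (by positivity) h3))

lemma le_vrsgdRate_mul_of_epoch {D R : ℕ → ℝ} {L μ η c T T' : ℝ} {m : ℕ} (hm : m ≠ 0)
    (hL : 0 < L) (hμ : 0 < μ) (hη : 0 < η) (hLη : 3 * L * η < 1) (hDm : 0 ≤ D m)
    (hRm : 0 ≤ R m)
    (hstep : ∀ k < m,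
      D (k + 1) ≤ 2 * L * η / (1 - L * η) * (D k + T) + 1 / (2 * η) * (R k - R (k + 1)))
    (hR0 : R 0 ≤ 2 / μ * D 0) (hD0 : D 0 ≤ c * T)
    (hT' : m * T' ≤ ∑ k ∈ Finset.range m, D (k + 1)) :
    T' ≤ vrsgdRate L μ η c m * T := by
  set α := 2 * L * η / (1 - L * η)
  have hm' : (0 : ℝ) < m := Nat.cast_pos.2 (Nat.pos_of_ne_zero hm)
  have h3 : 0 < 1 - 3 * L * η := by linarith
  have h1 : 0 < 1 - L * η := by linarith
  have hα : 0 ≤ α := by positivity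
  have h1α : 0 < 1 - α := by
    rw [show 1 - α = (1 - 3 * L * η) / (1 - L * η) by simp only [α]; field_simp; ring]
    positivity
  have hrate : vrsgdRate L μ η c m * (m * (1 - α)) = α * c + α * m + c / (μ * η) := by
    have := h1.ne'
    have : 1 - L * η * 3 ≠ 0 := by linarith
    simp only [vrsgdRate, α]
    field_simp
    ring
  have key : m * (1 - α) * T' ≤ m * (1 - α) * (vrsgdRate L μ η c m * T) := by
    calc m * (1 - α) * T'
        = (1 - α) * (m * T') := by ring
      _ ≤ (1 - α) * ∑ k ∈ Finset.range m, D (k + 1) := by gcongr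
      _ ≤ α * D 0 + α * m * T + 1 / (2 * η) * R 0 :=
          one_sub_mul_sum_le_of_le_add_sub hα (by positivity) hDm hRm hstep
      _ ≤ α * (c * T) + α * m * T + 1 / (2 * η) * (2 / μ * (c * T)) := by
          gcongr
          exact hR0.trans (by gcongr)
      _ = m * (1 - α) * (vrsgdRate L μ η c m * T) := by
          rw [show (m : ℝ) * (1 - α) * (vrsgdRate L μ η c m * T)
            = vrsgdRate L μ η c m * (m * (1 - α)) * T by ring, hrate]
          field_simp
  exact le_of_mul_le_mul_left key (by positivity)

section VRSGD

variable {E : Type*} [NormedAddCommGroup E] [InnerProductSpace ℝ E] [CompleteSpace E]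
  {n m S : ℕ}

/-- `ω s k` is the component sampled at inner step `k` of epoch `s`; `x ω s k` is the inner
iterate and `xt ω s` the snapshot entering epoch `s` (both indexed from `0`). -/
structure IsVRSGDRun (f : Fin n → E → ℝ) (favg g : E → ℝ) (η : ℝ) (x₀ : E)
    (x : (Fin S → Fin m → Fin n) → ℕ → ℕ → E) (xt : (Fin S → Fin m → Fin n) → ℕ → E) :
    Prop where
  snapshot_zero : ∀ ω, xt ω 0 = x₀
  iterate_zero : ∀ ω, x ω 0 0 = x₀
  iterate_succ_zero : ∀ ω (s : ℕ), s + 1 < S → x ω (s + 1) 0 = x ω s m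
  isProxPoint : ∀ ω (s : Fin S) (k : Fin m),
    IsProxPoint g η (vrGrad f favg (ω s k) (x ω s k) (xt ω s)) (x ω s k) (x ω s (k + 1 : ℕ))
  snapshot_succ : ∀ ω (s : Fin S),
    xt ω ((s : ℕ) + 1) = (1 / m : ℝ) • ∑ k ∈ Finset.range m, x ω s (k + 1)

namespace IsVRSGDRun

variable {f : Fin n → E → ℝ} {favg g : E → ℝ} {η : ℝ} {x₀ : E}
  {x : (Fin S → Fin m → Fin n) → ℕ → ℕ → E} {xt : (Fin S → Fin m → Fin n) → ℕ → E}

lemma iterate_congr (R : IsVRSGDRun f favg g η x₀ x xt) (hg : ConvexOn ℝ univ g) (hη : 0 < η)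
    {ω ω' : Fin S → Fin m → Fin n} {s : Fin S} (hxt : xt ω s = xt ω' s)
    (hx : x ω s 0 = x ω' s 0) :
    ∀ k ≤ m, (∀ k' : Fin m, (k' : ℕ) < k → ω s k' = ω' s k') → x ω s k = x ω' s k := by
  intro k
  induction k with
  | zero => exact fun _ _ => hx
  | succ k ih =>
    intro hk hω
    have hxk := ih (Nat.le_of_succ_le hk) fun k' hk' => hω k' (Nat.lt_succ_of_lt hk')
    have h := R.isProxPoint ω s ⟨k, hk⟩
    rw [hω ⟨k, hk⟩ (Nat.lt_succ_self k), hxk, hxt] at h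
    exact h.unique hg hη (R.isProxPoint ω' s ⟨k, hk⟩)

lemma start_congr (R : IsVRSGDRun f favg g η x₀ x xt) (hg : ConvexOn ℝ univ g) (hη : 0 < η)
    {ω ω' : Fin S → Fin m → Fin n} :
    ∀ s < S, (∀ s' : Fin S, (s' : ℕ) < s → ω s' = ω' s') →
      xt ω s = xt ω' s ∧ x ω s 0 = x ω' s 0 := by
  intro s
  induction s with
  | zero => exact fun _ _ => ⟨by rw [R.snapshot_zero, R.snapshot_zero],
      by rw [R.iterate_zero, R.iterate_zero]⟩
  | succ s ih =>
    intro hs hω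
    have hs' : s < S := Nat.lt_of_succ_lt hs
    obtain ⟨hxt, hx⟩ := ih hs' fun s' hs' => hω s' (Nat.lt_succ_of_lt hs')
    have hiter : ∀ k ≤ m, x ω s k = x ω' s k := fun k hk =>
      R.iterate_congr (s := ⟨s, hs'⟩) hg hη hxt hx k hk fun k' _ =>
        congrFun (hω ⟨s, hs'⟩ (Nat.lt_succ_self s)) k'
    refine ⟨?_, ?_⟩
    · rw [R.snapshot_succ ω ⟨s, hs'⟩, R.snapshot_succ ω' ⟨s, hs'⟩]
      congr 1
      exact Finset.sum_congr rfl fun k hk => hiter (k + 1) (Finset.mem_range.1 hk)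
    · rw [R.iterate_succ_zero ω s hs, R.iterate_succ_zero ω' s hs]
      exact hiter m le_rfl

lemma congr_of_eq_off (R : IsVRSGDRun f favg g η x₀ x xt) (hg : ConvexOn ℝ univ g) (hη : 0 < η)
    {ω ω' : Fin S → Fin m → Fin n} (s : Fin S) (k : Fin m)
    (hω : ∀ s' k', (s', k') ≠ (s, k) → ω s' k' = ω' s' k') :
    (x ω s k, xt ω s) = (x ω' s k, xt ω' s) := by
  obtain ⟨hxt, hx⟩ := R.start_congr hg hη s s.isLt fun s' hs' =>
    funext fun k' => hω s' k' fun h => (Fin.ext_iff.not.2 hs'.ne) (Prod.mk.inj h).1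
  rw [R.iterate_congr hg hη hxt hx k k.isLt.le fun k' hk' =>
    hω s k' fun h => (Fin.ext_iff.not.2 hk'.ne) (Prod.mk.inj h).2, hxt]

variable {L : ℝ} {F : E → ℝ} {xs : E}

lemma card_mul_sum_eq_sum_sum (R : IsVRSGDRun f favg g η x₀ x xt) (hg : ConvexOn ℝ univ g)
    (hη : 0 < η) (s : Fin S) (k : Fin m) (Φ : Fin n → E → E → ℝ) :
    (n : ℝ) * ∑ ω, Φ (ω s k) (x ω s k) (xt ω s) = ∑ ω, ∑ i, Φ i (x ω s k) (xt ω s) := by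
  simpa only [Fintype.card_fin] using card_mul_sum_apply_apply_eq_sum_sum s k
    (fun ω => (x ω s k, xt ω s)) (fun ω ω' h => R.congr_of_eq_off hg hη s k h)
    fun i p => Φ i p.1 p.2

lemma sum_inner_vrGrad_sub_eq_zero (R : IsVRSGDRun f favg g η x₀ x xt)
    (P : IsCompositeFiniteSum L f favg g F) (hn : n ≠ 0) (hη : 0 < η) (s : Fin S) (k : Fin m)
    (z : E) :
    ∑ ω, ⟪vrGrad f favg (ω s k) (x ω s k) (xt ω s) - gradient favg (x ω s k), z - x ω s k⟫
      = 0 := by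
  have h := R.card_mul_sum_eq_sum_sum P.convexOn_g hη s k
    fun i y y' => ⟪vrGrad f favg i y y' - gradient favg y, z - y⟫
  simp only [← sum_inner, P.sum_vrGrad_sub_gradient hn, inner_zero_left,
    Finset.sum_const_zero] at h
  exact (mul_eq_zero.1 h).resolve_left (Nat.cast_ne_zero.2 hn)

lemma sum_norm_vrGrad_sub_sq_le (R : IsVRSGDRun f favg g η x₀ x xt)
    (P : IsCompositeFiniteSum L f favg g F) (hn : n ≠ 0) (hL : 0 < L) (hη : 0 < η)
    (hmin : ∀ z, F xs ≤ F z) (s : Fin S) (k : Fin m) :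
    ∑ ω, ‖vrGrad f favg (ω s k) (x ω s k) (xt ω s) - gradient favg (x ω s k)‖ ^ 2
      ≤ 4 * L * (∑ ω, (F (x ω s k) - F xs) + ∑ ω, (F (xt ω s) - F xs)) := by
  have h := R.card_mul_sum_eq_sum_sum P.convexOn_g hη s k
    fun i y y' => ‖vrGrad f favg i y y' - gradient favg y‖ ^ 2
  refine le_of_mul_le_mul_left ?_ (Nat.cast_pos.2 (Nat.pos_of_ne_zero hn))
  rw [h, ← Finset.sum_add_distrib, Finset.mul_sum, Finset.mul_sum]
  exact Finset.sum_le_sum fun ω _ => P.sum_norm_vrGrad_sub_sq_le hn hL hmin _ _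

lemma sum_sub_le (R : IsVRSGDRun f favg g η x₀ x xt) (P : IsCompositeFiniteSum L f favg g F)
    (hn : n ≠ 0) (hL : 0 < L) (hη : 0 < η) (hLη : L * η < 1) (hmin : ∀ z, F xs ≤ F z)
    (s : Fin S) (k : Fin m) :
    ∑ ω, (F (x ω s (k + 1 : ℕ)) - F xs)
      ≤ 2 * L * η / (1 - L * η) * (∑ ω, (F (x ω s k) - F xs) + ∑ ω, (F (xt ω s) - F xs))
        + 1 / (2 * η) * (∑ ω, ‖xs - x ω s k‖ ^ 2 - ∑ ω, ‖xs - x ω s (k + 1 : ℕ)‖ ^ 2) := by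
  set Δ : (Fin S → Fin m → Fin n) → E := fun ω =>
    vrGrad f favg (ω s k) (x ω s k) (xt ω s) - gradient favg (x ω s k)
  have hstep : ∀ ω, F (x ω s (k + 1 : ℕ)) - F xs
      ≤ η / (2 * (1 - L * η)) * ‖Δ ω‖ ^ 2 + ⟪Δ ω, xs - x ω s k⟫
        + 1 / (2 * η) * (‖xs - x ω s k‖ ^ 2 - ‖xs - x ω s (k + 1 : ℕ)‖ ^ 2) := fun ω => by
    rw [P.eq_add, P.eq_add]
    exact (R.isProxPoint ω s k).add_sub_add_le hη hLη
      (convexOn_average P.convexOn P.average_eq)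
      (differentiable_average P.differentiable P.average_eq)
      (norm_gradient_average_sub_le hn P.differentiable P.lipschitz_gradient P.average_eq)
      P.convexOn_g xs
  have hcoef : η / (2 * (1 - L * η)) * (4 * L) = 2 * L * η / (1 - L * η) := by
    have : 1 - L * η ≠ 0 := by linarith
    field_simp
    ring
  calc ∑ ω, (F (x ω s (k + 1 : ℕ)) - F xs)
      ≤ ∑ ω, (η / (2 * (1 - L * η)) * ‖Δ ω‖ ^ 2 + ⟪Δ ω, xs - x ω s k⟫
          + 1 / (2 * η) * (‖xs - x ω s k‖ ^ 2 - ‖xs - x ω s (k + 1 : ℕ)‖ ^ 2)) :=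
        Finset.sum_le_sum fun ω _ => hstep ω
    _ = η / (2 * (1 - L * η)) * ∑ ω, ‖Δ ω‖ ^ 2
          + 1 / (2 * η) * (∑ ω, ‖xs - x ω s k‖ ^ 2 - ∑ ω, ‖xs - x ω s (k + 1 : ℕ)‖ ^ 2) := by
        rw [Finset.sum_add_distrib, Finset.sum_add_distrib,
          R.sum_inner_vrGrad_sub_eq_zero P hn hη s k xs, ← Finset.mul_sum, ← Finset.mul_sum,
          Finset.sum_sub_distrib, add_zero]
    _ ≤ _ := by
        rw [← hcoef, mul_assoc]
        gcongr
        exact R.sum_norm_vrGrad_sub_sq_le P hn hL hη hmin s k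

lemma card_mul_sub_le (R : IsVRSGDRun f favg g η x₀ x xt) (hF : ConvexOn ℝ univ F)
    (hm : m ≠ 0) (ω : Fin S → Fin m → Fin n) (s : Fin S) (z : E) :
    m * (F (xt ω (s + 1 : ℕ)) - F z) ≤ ∑ k ∈ Finset.range m, (F (x ω s (k + 1)) - F z) := by
  have hm' : (0 : ℝ) < m := Nat.cast_pos.2 (Nat.pos_of_ne_zero hm)
  have hjensen : F (xt ω (s + 1 : ℕ)) ≤ ∑ k ∈ Finset.range m, (1 / m : ℝ) • F (x ω s (k + 1)) := by
    rw [R.snapshot_succ, Finset.smul_sum]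
    refine hF.map_sum_le (fun _ _ => by positivity) ?_ fun _ _ => mem_univ _
    rw [Finset.sum_const, Finset.card_range, nsmul_eq_mul]
    field_simp
  rw [← Finset.smul_sum, smul_eq_mul] at hjensen
  have h := mul_le_mul_of_nonneg_left hjensen hm'.le
  rw [← mul_assoc, mul_one_div_cancel hm'.ne', one_mul] at h
  rw [Finset.sum_sub_distrib, Finset.sum_const, Finset.card_range, nsmul_eq_mul]
  linarith

lemma sum_snapshot_succ_le {μ c : ℝ} (R : IsVRSGDRun f favg g η x₀ x xt)
    (P : IsCompositeFiniteSum L f favg g F) (hn : n ≠ 0) (hm : m ≠ 0) (hL : 0 < L) (hμ : 0 < μ)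
    (hη : 0 < η) (hLη : 3 * L * η < 1) (hsc : StrongConvexOn univ μ F)
    (hmin : ∀ z, F xs ≤ F z) (s : Fin S)
    (hstart : ∑ ω, (F (x ω s 0) - F xs) ≤ c * ∑ ω, (F (xt ω s) - F xs)) :
    ∑ ω, (F (xt ω (s + 1 : ℕ)) - F xs) ≤ vrsgdRate L μ η c m * ∑ ω, (F (xt ω s) - F xs) := by
  refine le_vrsgdRate_mul_of_epoch (D := fun k => ∑ ω, (F (x ω s k) - F xs))
    (R := fun k => ∑ ω, ‖xs - x ω s k‖ ^ 2) hm hL hμ hη hLη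
    (Finset.sum_nonneg fun ω _ => sub_nonneg.2 (hmin _)) (by positivity)
    (fun k hk => R.sum_sub_le P hn hL hη (by linarith) hmin s ⟨k, hk⟩) ?_ hstart ?_
  · simp only [Finset.mul_sum]
    refine Finset.sum_le_sum fun ω _ => ?_
    have h := hsc.mul_sq_norm_sub_le hmin (x ω s 0)
    rw [norm_sub_rev] at h
    rw [div_mul_eq_mul_div, le_div_iff₀ hμ]
    linarith
  · rw [Finset.sum_comm, Finset.mul_sum]
    exact Finset.sum_le_sum fun ω _ =>
      R.card_mul_sub_le (hsc.convexOn fun r => by positivity) hm ω s xs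

end IsVRSGDRun

end VRSGD

theorem stmt_16_general (d n m S : ℕ) (hn : 0 < n) (hm : 0 < m)
    (L μ η c ρ : ℝ) (hL : 0 < L) (hμ : 0 < μ) (hc : 0 < c)
    (hηpos : 0 < η) (hη3 : η < 1 / (3 * L))
    (hρ : ρ = 2 * L * η * ((m : ℝ) + c) / ((m : ℝ) * (1 - 3 * L * η))
            + c * (1 - L * η) / ((m : ℝ) * μ * η * (1 - 3 * L * η)))
    (f : Fin n → EuclideanSpace ℝ (Fin d) → ℝ)
    (hconv : ∀ i, ConvexOn ℝ Set.univ (f i))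
    (hdiff : ∀ i, Differentiable ℝ (f i))
    (hlip : ∀ i x y, ‖gradient (f i) x - gradient (f i) y‖ ≤ L * ‖x - y‖)
    (favg : EuclideanSpace ℝ (Fin d) → ℝ)
    (hfavg : ∀ x, favg x = (1 / n : ℝ) * ∑ i, f i x)
    (g : EuclideanSpace ℝ (Fin d) → ℝ) (hgconv : ConvexOn ℝ Set.univ g)
    (F : EuclideanSpace ℝ (Fin d) → ℝ) (hF : ∀ x, F x = favg x + g x)
    (hsc : StrongConvexOn Set.univ μ F)
    (xstar : EuclideanSpace ℝ (Fin d)) (hmin : ∀ x, F xstar ≤ F x)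
    (xt0 : EuclideanSpace ℝ (Fin d))
    (x : (Fin S → Fin m → Fin n) → ℕ → ℕ → EuclideanSpace ℝ (Fin d))
    (xt : (Fin S → Fin m → Fin n) → ℕ → EuclideanSpace ℝ (Fin d))
    (hxt0 : ∀ ω, xt ω 0 = xt0)
    (hstart0 : ∀ ω, x ω 0 0 = xt0)
    (hstart : ∀ ω (s : ℕ), s + 1 < S → x ω (s + 1) 0 = x ω s m)
    (hstep : ∀ ω (s : Fin S) (k : Fin m), ∀ y,
      g (x ω (s : ℕ) ((k : ℕ) + 1))
          + ⟪gradient (f (ω s k)) (x ω (s : ℕ) (k : ℕ))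
              - gradient (f (ω s k)) (xt ω (s : ℕ)) + gradient favg (xt ω (s : ℕ)),
            x ω (s : ℕ) ((k : ℕ) + 1)⟫
          + (1 / (2 * η)) * ‖x ω (s : ℕ) ((k : ℕ) + 1) - x ω (s : ℕ) (k : ℕ)‖ ^ 2
        ≤ g y
          + ⟪gradient (f (ω s k)) (x ω (s : ℕ) (k : ℕ))
              - gradient (f (ω s k)) (xt ω (s : ℕ)) + gradient favg (xt ω (s : ℕ)), y⟫
          + (1 / (2 * η)) * ‖y - x ω (s : ℕ) (k : ℕ)‖ ^ 2)
    (hsnap : ∀ ω (s : Fin S),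
      xt ω ((s : ℕ) + 1) = (1 / m : ℝ) • ∑ k ∈ Finset.range m, x ω (s : ℕ) (k + 1))
    (hassump3 : ∀ s : Fin S,
      (Fintype.card (Fin S → Fin m → Fin n) : ℝ)⁻¹ *
          ∑ ω : Fin S → Fin m → Fin n, (F (x ω (s : ℕ) 0) - F xstar)
        ≤ c * ((Fintype.card (Fin S → Fin m → Fin n) : ℝ)⁻¹ *
            ∑ ω : Fin S → Fin m → Fin n, (F (xt ω (s : ℕ)) - F xstar)))
    (xhat : (Fin S → Fin m → Fin n) → EuclideanSpace ℝ (Fin d))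
    (hout : ∀ ω,
      (F (xt ω S) ≤ F ((1 / S : ℝ) • ∑ s ∈ Finset.range S, xt ω (s + 1)) →
        xhat ω = xt ω S) ∧
      (¬ F (xt ω S) ≤ F ((1 / S : ℝ) • ∑ s ∈ Finset.range S, xt ω (s + 1)) →
        xhat ω = (1 / S : ℝ) • ∑ s ∈ Finset.range S, xt ω (s + 1))) :
    (Fintype.card (Fin S → Fin m → Fin n) : ℝ)⁻¹ *
        ∑ ω : Fin S → Fin m → Fin n, (F (xhat ω) - F xstar)
      ≤ ρ ^ S * (F xt0 - F xstar) := by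
  have P : IsCompositeFiniteSum L f favg g F := ⟨hconv, hdiff, hlip, hfavg, hgconv, hF⟩
  have R : IsVRSGDRun f favg g η xt0 x xt := ⟨hxt0, hstart0, hstart, hstep, hsnap⟩
  have hLη : 3 * L * η < 1 := by
    rw [lt_div_iff₀ (by positivity)] at hη3
    linarith
  have : Nonempty (Fin S → Fin m → Fin n) := ⟨fun _ _ => ⟨0, hn⟩⟩
  have hN : (0 : ℝ) < Fintype.card (Fin S → Fin m → Fin n) := Nat.cast_pos.2 Fintype.card_pos
  set T : ℕ → ℝ := fun s => ∑ ω, (F (xt ω s) - F xstar)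
  have hcontract : ∀ s < S, T (s + 1) ≤ ρ * T s := fun s hs => by
    have h := hassump3 ⟨s, hs⟩
    rw [mul_left_comm] at h
    rw [hρ]
    exact R.sum_snapshot_succ_le P hn.ne' hm.ne' hL hμ hηpos hLη hsc hmin ⟨s, hs⟩
      (le_of_mul_le_mul_left h (inv_pos.2 hN))
  have hρ0 : 0 ≤ ρ := hρ ▸ vrsgdRate_nonneg hL hμ hηpos hLη hc.le
  have hxhat : ∀ ω, F (xhat ω) ≤ F (xt ω S) := fun ω => by
    by_cases h : F (xt ω S) ≤ F ((1 / S : ℝ) • ∑ s ∈ Finset.range S, xt ω (s + 1))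
    · rw [(hout ω).1 h]
    · rw [(hout ω).2 h]
      exact (not_le.1 h).le
  calc (Fintype.card (Fin S → Fin m → Fin n) : ℝ)⁻¹ * ∑ ω, (F (xhat ω) - F xstar)
      ≤ (Fintype.card (Fin S → Fin m → Fin n) : ℝ)⁻¹ * T S := by
        gcongr
        exact Finset.sum_le_sum fun ω _ => sub_le_sub_right (hxhat ω) _
    _ ≤ (Fintype.card (Fin S → Fin m → Fin n) : ℝ)⁻¹ * (ρ ^ S * T 0) := by
        gcongr
        exact le_geom hρ0 S hcontract
    _ = ρ ^ S * (F xt0 - F xstar) := by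
        simp only [T, hxt0, Finset.sum_const, Finset.card_univ, nsmul_eq_mul]
        field_simp

/-- linear convergence of VR-SGD (Option I) for strongly convex composite
objectives, under Assumption 3 (`E[F(x₀ˢ) − F(x*)] ≤ c·E[F(x̃ˢ⁻¹) − F(x*)]`) and
`ρ < 1`. Expectations are uniform averages over `ω : Fin S → Fin m → Fin n`. -/
theorem stmt_16 (d n m S : ℕ) (hn : 0 < n) (hm : 0 < m) (hS : 0 < S)
    (L μ η c ρ : ℝ) (hL : 0 < L) (hμ : 0 < μ) (hc : 0 < c)
    (hηpos : 0 < η) (hη3 : η < 1 / (3 * L))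
    (hρ : ρ = 2 * L * η * ((m : ℝ) + c) / ((m : ℝ) * (1 - 3 * L * η))
            + c * (1 - L * η) / ((m : ℝ) * μ * η * (1 - 3 * L * η)))
    (hρ1 : ρ < 1)
    (f : Fin n → EuclideanSpace ℝ (Fin d) → ℝ)
    (hconv : ∀ i, ConvexOn ℝ Set.univ (f i))
    (hdiff : ∀ i, Differentiable ℝ (f i))
    (hlip : ∀ i x y, ‖gradient (f i) x - gradient (f i) y‖ ≤ L * ‖x - y‖)
    (favg : EuclideanSpace ℝ (Fin d) → ℝ)
    (hfavg : ∀ x, favg x = (1 / n : ℝ) * ∑ i, f i x)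
    (g : EuclideanSpace ℝ (Fin d) → ℝ) (hgconv : ConvexOn ℝ Set.univ g)
    (F : EuclideanSpace ℝ (Fin d) → ℝ) (hF : ∀ x, F x = favg x + g x)
    (hsc : StrongConvexOn Set.univ μ F)
    (xstar : EuclideanSpace ℝ (Fin d)) (hmin : ∀ x, F xstar ≤ F x)
    (xt0 : EuclideanSpace ℝ (Fin d))
    (x : (Fin S → Fin m → Fin n) → ℕ → ℕ → EuclideanSpace ℝ (Fin d))
    (xt : (Fin S → Fin m → Fin n) → ℕ → EuclideanSpace ℝ (Fin d))
    (hxt0 : ∀ ω, xt ω 0 = xt0)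
    (hstart0 : ∀ ω, x ω 0 0 = xt0)
    (hstart : ∀ ω (s : ℕ), s + 1 < S → x ω (s + 1) 0 = x ω s m)
    (hstep : ∀ ω (s : Fin S) (k : Fin m), ∀ y,
      g (x ω (s : ℕ) ((k : ℕ) + 1))
          + ⟪gradient (f (ω s k)) (x ω (s : ℕ) (k : ℕ))
              - gradient (f (ω s k)) (xt ω (s : ℕ)) + gradient favg (xt ω (s : ℕ)),
            x ω (s : ℕ) ((k : ℕ) + 1)⟫
          + (1 / (2 * η)) * ‖x ω (s : ℕ) ((k : ℕ) + 1) - x ω (s : ℕ) (k : ℕ)‖ ^ 2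
        ≤ g y
          + ⟪gradient (f (ω s k)) (x ω (s : ℕ) (k : ℕ))
              - gradient (f (ω s k)) (xt ω (s : ℕ)) + gradient favg (xt ω (s : ℕ)), y⟫
          + (1 / (2 * η)) * ‖y - x ω (s : ℕ) (k : ℕ)‖ ^ 2)
    (hsnap : ∀ ω (s : Fin S),
      xt ω ((s : ℕ) + 1) = (1 / m : ℝ) • ∑ k ∈ Finset.range m, x ω (s : ℕ) (k + 1))
    (hassump3 : ∀ s : Fin S,
      (Fintype.card (Fin S → Fin m → Fin n) : ℝ)⁻¹ *
          ∑ ω : Fin S → Fin m → Fin n, (F (x ω (s : ℕ) 0) - F xstar)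
        ≤ c * ((Fintype.card (Fin S → Fin m → Fin n) : ℝ)⁻¹ *
            ∑ ω : Fin S → Fin m → Fin n, (F (xt ω (s : ℕ)) - F xstar)))
    (xhat : (Fin S → Fin m → Fin n) → EuclideanSpace ℝ (Fin d))
    (hout : ∀ ω,
      (F (xt ω S) ≤ F ((1 / S : ℝ) • ∑ s ∈ Finset.range S, xt ω (s + 1)) →
        xhat ω = xt ω S) ∧
      (¬ F (xt ω S) ≤ F ((1 / S : ℝ) • ∑ s ∈ Finset.range S, xt ω (s + 1)) →
        xhat ω = (1 / S : ℝ) • ∑ s ∈ Finset.range S, xt ω (s + 1))) :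
    (Fintype.card (Fin S → Fin m → Fin n) : ℝ)⁻¹ *
        ∑ ω : Fin S → Fin m → Fin n, (F (xhat ω) - F xstar)
      ≤ ρ ^ S * (F xt0 - F xstar) :=
  stmt_16_general d n m S hn hm L μ η c ρ hL hμ hc hηpos hη3 hρ f hconv hdiff hlip favg hfavg g
    hgconv F hF hsc xstar hmin xt0 x xt hxt0 hstart0 hstart hstep hsnap hassump3 xhat hout
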